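/- arXiv:1510.07026 — 4 statements merged into one kernel-verified Lean document; each statement's English description precedes it below -/
import Mathlib

section
/- Let u_min, u_max, y0, α be real numbers with 0 < u_min ≤ u_max and y0 < α. Then (α − y0)/u_min is the greatest element of the set {t ∈ ℝ | t ≥ 0 and there exists an admissible control u with y0 + ∫₀ᵗ u(s) ds = α}; that is, this set contains (α − y0)/u_min, and every element t of the set satisfies t ≤ (α − y0)/u_min. (This value is the deadline of a vehicle's first conflict area under single-integrator dynamics.) -/
/-!
Reaching `α` at time `t` means `∫₀ᵗ u = α - y0`. Since every admissible control is at least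
`umin`, this integral is at least `umin * t`, so `t ≤ (α - y0) / umin`; the constant control
`umin` attains the bound.
-/

/-- An admissible control for speed bounds `0 < umin ≤ umax`: a measurable
function with values in `[umin, umax]` at all nonnegative times. -/
def Admissible (umin umax : ℝ) (u : ℝ → ℝ) : Prop :=
  Measurable u ∧ ∀ s : ℝ, 0 ≤ s → umin ≤ u s ∧ u s ≤ umax

open MeasureTheory

theorem admissible_const {umin umax : ℝ} (h : umin ≤ umax) :
    Admissible umin umax fun _ => umin :=
  ⟨measurable_const, fun _ _ => ⟨le_rfl, h⟩⟩

namespace Admissible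

variable {umin umax : ℝ} {u : ℝ → ℝ}

theorem intervalIntegrable (hu : Admissible umin umax u) {t : ℝ} (ht : 0 ≤ t) :
    IntervalIntegrable u volume 0 t := by
  rw [intervalIntegrable_iff_integrableOn_Ioc_of_le ht]
  refine Measure.integrableOn_of_bounded (M := max |umin| |umax|) measure_Ioc_lt_top.ne
    hu.1.aestronglyMeasurable ?_
  filter_upwards [ae_restrict_mem measurableSet_Ioc] with s hs
  obtain ⟨hlow, hupp⟩ := hu.2 s hs.1.le
  exact abs_le_max_abs_abs hlow hupp

theorem mul_le_integral (hu : Admissible umin umax u) {t : ℝ} (ht : 0 ≤ t) :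
    umin * t ≤ ∫ s in (0:ℝ)..t, u s := by
  calc umin * t = ∫ _ in (0:ℝ)..t, umin := by simp [mul_comm]
    _ ≤ ∫ s in (0:ℝ)..t, u s :=
      intervalIntegral.integral_mono_on ht intervalIntegrable_const (hu.intervalIntegrable ht)
        fun s hs => (hu.2 s hs.1).1

end Admissible

/-- The deadline `(α - y0)/umin` is the greatest time at which a vehicle
with single-integrator dynamics can reach position `α` from `y0`. -/
theorem deadline_first (umin umax y0 α : ℝ)
    (humin : 0 < umin) (hbound : umin ≤ umax) (hy0 : y0 < α) :
    IsGreatest {t : ℝ | 0 ≤ t ∧ ∃ u : ℝ → ℝ, Admissible umin umax u ∧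
        y0 + ∫ s in (0:ℝ)..t, u s = α}
      ((α - y0) / umin) := by
  refine ⟨⟨div_nonneg (sub_nonneg.2 hy0.le) humin.le, _, admissible_const hbound, ?_⟩, ?_⟩
  · rw [intervalIntegral.integral_const, smul_eq_mul, sub_zero, div_mul_cancel₀ _ humin.ne']
    ring
  · rintro t ⟨ht, u, hu, hreach⟩
    rw [le_div_iff₀ humin]
    linarith [hu.mul_le_integral ht]
end

section
/- Let y, y' : ℝ → ℝ be continuous and strictly increasing on [0, ∞), and let α < β, α' < β' be real numbers. Let T, P, T', P' ≥ 0 satisfy y(T) = α, y(P) = β, y'(T') = α', and y'(P') = β'. Suppose the two trajectories never collide at the conflict area, i.e., for every t ≥ 0 it is not the case that both α < y(t) < β and α' < y'(t) < β'. If T ≤ T', then P ≤ T'. (Collision-freedom forces the first vehicle to exit the conflict area before the second vehicle enters it.) -/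
open Set

theorem StrictMonoOn.mapsTo_Ioo_of_Ici {α β : Type*} [Preorder α] [Preorder β] {f : α → β}
    {c a b : α} (h : StrictMonoOn f (Ici c)) (hca : c ≤ a) :
    MapsTo f (Ioo a b) (Ioo (f a) (f b)) :=
  (h.mono (Icc_subset_Ici_self.trans (Ici_subset_Ici.2 hca))).mapsTo_Ioo

theorem exit_before_entry_of_no_collision_general (y y' : ℝ → ℝ)
    (hym : StrictMonoOn y (Set.Ici (0:ℝ)))
    (hy'm : StrictMonoOn y' (Set.Ici (0:ℝ)))
    (α β α' β' : ℝ) (hα'β' : α' < β')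
    (T P T' P' : ℝ) (hT : 0 ≤ T) (hT' : 0 ≤ T') (hP' : 0 ≤ P')
    (hyT : y T = α) (hyP : y P = β) (hy'T' : y' T' = α') (hy'P' : y' P' = β')
    (hsafe : ∀ t : ℝ, 0 ≤ t →
      ¬ ((α < y t ∧ y t < β) ∧ (α' < y' t ∧ y' t < β')))
    (hTT' : T ≤ T') : P ≤ T' := by
  by_contra! hT'P
  have hT'P' : T' < P' := (hy'm.lt_iff_lt hT' hP').1 (by rwa [hy'T', hy'P'])
  -- any time strictly between T' and min P P' has both vehicles inside the conflict area
  obtain ⟨t, hT't, ht⟩ := exists_between (lt_min hT'P hT'P')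
  have hy := hym.mapsTo_Ioo_of_Ici hT ⟨hTT'.trans_lt hT't, ht.trans_le (min_le_left P P')⟩
  have hy' := hy'm.mapsTo_Ioo_of_Ici hT' ⟨hT't, ht.trans_le (min_le_right P P')⟩
  rw [hyT, hyP] at hy
  rw [hy'T', hy'P'] at hy'
  exact hsafe t (hT'.trans hT't.le) ⟨hy, hy'⟩

/-- If two continuous, strictly increasing trajectories never simultaneously
lie strictly inside the conflict area, and the first vehicle enters no later
than the second (`T ≤ T'`), then the first vehicle exits before the second
enters (`P ≤ T'`). -/
theorem exit_before_entry_of_no_collision (y y' : ℝ → ℝ)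
    (hyc : ContinuousOn y (Set.Ici (0:ℝ)))
    (hym : StrictMonoOn y (Set.Ici (0:ℝ)))
    (hy'c : ContinuousOn y' (Set.Ici (0:ℝ)))
    (hy'm : StrictMonoOn y' (Set.Ici (0:ℝ)))
    (α β α' β' : ℝ) (hαβ : α < β) (hα'β' : α' < β')
    (T P T' P' : ℝ) (hT : 0 ≤ T) (hP : 0 ≤ P) (hT' : 0 ≤ T') (hP' : 0 ≤ P')
    (hyT : y T = α) (hyP : y P = β) (hy'T' : y' T' = α') (hy'P' : y' P' = β')
    (hsafe : ∀ t : ℝ, 0 ≤ t →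
      ¬ ((α < y t ∧ y t < β) ∧ (α' < y' t ∧ y' t < β')))
    (hTT' : T ≤ T') : P ≤ T' :=
  exit_before_entry_of_no_collision_general y y' hym hy'm α β α' β' hα'β' T P T' P' hT hT' hP' hyT
    hyP hy'T' hy'P' hsafe hTT'
end

section
/- Let y, y' : ℝ → ℝ be strictly increasing on [0, ∞), and let α < β, α' < β' be real numbers. Let T, P, T' ≥ 0 satisfy y(P) = β and y'(T') = α'. If P ≤ T', then for every t ≥ 0 it is not the case that both α < y(t) < β and α' < y'(t) < β'. (If one vehicle exits the conflict area before the other enters it, no collision occurs at that conflict area.) -/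
theorem no_collision_of_exit_before_entry_general (y y' : ℝ → ℝ)
    (hym : StrictMonoOn y (Set.Ici (0:ℝ)))
    (hy'm : StrictMonoOn y' (Set.Ici (0:ℝ)))
    (α β α' β' : ℝ)
    (P T' : ℝ) (hP : 0 ≤ P) (hT' : 0 ≤ T')
    (hyP : y P = β) (hy'T' : y' T' = α')
    (hPT' : P ≤ T') :
    ∀ t : ℝ, 0 ≤ t →
      ¬ ((α < y t ∧ y t < β) ∧ (α' < y' t ∧ y' t < β')) := by
  rintro t ht ⟨⟨-, hyt⟩, ⟨hy't, -⟩⟩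
  have hbefore_exit : t < P := (hym.lt_iff_lt ht hP).1 (hyP ▸ hyt)
  have hafter_entry : T' < t := (hy'm.lt_iff_lt hT' ht).1 (hy'T' ▸ hy't)
  exact (hbefore_exit.trans_le hPT').not_gt hafter_entry

/-- If the first vehicle exits the conflict area before the second one enters
it (`P ≤ T'`), then at no time are both vehicles strictly inside the conflict
area: no collision occurs there. -/
theorem no_collision_of_exit_before_entry (y y' : ℝ → ℝ)
    (hym : StrictMonoOn y (Set.Ici (0:ℝ)))
    (hy'm : StrictMonoOn y' (Set.Ici (0:ℝ)))
    (α β α' β' : ℝ) (hαβ : α < β) (hα'β' : α' < β')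
    (T P T' : ℝ) (hT : 0 ≤ T) (hP : 0 ≤ P) (hT' : 0 ≤ T')
    (hyP : y P = β) (hy'T' : y' T' = α')
    (hPT' : P ≤ T') :
    ∀ t : ℝ, 0 ≤ t →
      ¬ ((α < y t ∧ y t < β) ∧ (α' < y' t ∧ y' t < β')) :=
  no_collision_of_exit_before_entry_general y y' hym hy'm α β α' β' P T' hP hT' hyP hy'T' hPT'
end

section
/- (Lemma 1, single-integrator form.) Let u_min, u_max, y0 be real numbers with 0 < u_min ≤ u_max, let d ≥ 1, let α : Fin d → ℝ be strictly increasing with y0 < α(0), and let T : Fin d → ℝ satisfy (α(0) − y0)/u_max ≤ T(0) ≤ (α(0) − y0)/u_min and, for every index k with k + 1 < d, (α(k+1) − α(k))/u_max ≤ T(k+1) − T(k) ≤ (α(k+1) − α(k))/u_min. Then there exists a single admissible control u such that y0 + ∫₀^{T(k)} u(s) ds = α(k) for every k. (A schedule of entry times satisfying all release-time and deadline constraints along a vehicle's route is realizable by one admissible input signal.) -/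
/-!
Drive at constant speed on each leg: on `[T(k-1), T(k)]` (with `T(-1) = 0`, `α(-1) = y0`) use the
average speed `(α(k) - α(k-1)) / (T(k) - T(k-1))`, which the release-time and deadline bounds put
in `[u_min, u_max]`. The control is built by induction on the number of legs, each step keeping
the control up to the last scheduled time and switching to the new speed afterwards.
-/

open MeasureTheory Set

theorem intervalIntegrable_of_forall_mem_Icc {a b : ℝ} {u : ℝ → ℝ} (hu : Measurable u)
    (hub : ∀ s, u s ∈ Icc a b) (x y : ℝ) : IntervalIntegrable u volume x y := by
  refine (intervalIntegrable_const (c := max |a| |b|)).mono_fun' hu.aestronglyMeasurable ?_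
  exact Filter.Eventually.of_forall fun s => abs_le_max_abs_abs (hub s).1 (hub s).2

section Switch

variable {f g : ℝ → ℝ} {x y c : ℝ}

theorem integral_ite_le_of_le (hx : x ≤ c) (hy : y ≤ c) :
    ∫ s in x..y, (if s ≤ c then f s else g s) = ∫ s in x..y, f s :=
  intervalIntegral.integral_congr_ae <| Filter.Eventually.of_forall fun _ hs =>
    if_pos (hs.2.trans (max_le hx hy))

theorem integral_ite_le_of_ge (hc : c ≤ x) (hxy : x ≤ y) :
    ∫ s in x..y, (if s ≤ c then f s else g s) = ∫ s in x..y, g s := by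
  refine intervalIntegral.integral_congr_ae <| Filter.Eventually.of_forall fun s hs => ?_
  rw [uIoc_of_le hxy] at hs
  exact if_neg (hc.trans_lt hs.1).not_ge

end Switch

theorem exists_control_of_slopes_mem_Icc {a b : ℝ} (hab : a ≤ b) :
    ∀ {n : ℕ} (t p : Fin (n + 1) → ℝ), Monotone t →
      (∀ i : Fin n, ∃ v ∈ Icc a b, p i.succ - p i.castSucc = v * (t i.succ - t i.castSucc)) →
      ∃ u : ℝ → ℝ, Measurable u ∧ (∀ s, u s ∈ Icc a b) ∧
        ∀ k, ∫ s in t 0..t k, u s = p k - p 0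
  | 0, t, p, _, _ =>
    ⟨fun _ => a, measurable_const, fun _ => ⟨le_rfl, hab⟩, fun k => by fin_cases k; simp⟩
  | n + 1, t, p, ht, hslope => by
    obtain ⟨u, hu, hub, hint⟩ := exists_control_of_slopes_mem_Icc hab (t ∘ Fin.castSucc)
      (p ∘ Fin.castSucc) (ht.comp Fin.strictMono_castSucc.monotone)
      (fun i => by simpa using hslope i.castSucc)
    obtain ⟨v, hv, hpv⟩ := hslope (Fin.last n)
    set c := t (Fin.last n).castSucc
    have hmeas : Measurable fun s => if s ≤ c then u s else v :=
      hu.ite measurableSet_Iic measurable_const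
    have hmem : ∀ s, (if s ≤ c then u s else v) ∈ Icc a b := fun s => by
      split_ifs
      exacts [hub s, hv]
    have hprefix : ∀ j : Fin (n + 1),
        ∫ s in t 0..t j.castSucc, (if s ≤ c then u s else v) = p j.castSucc - p 0 := fun j => by
      rw [integral_ite_le_of_le (ht (Fin.zero_le _))
        (ht (Fin.castSucc_le_castSucc_iff.mpr (Fin.le_last j)))]
      exact hint j
    refine ⟨_, hmeas, hmem, fun k => ?_⟩
    induction k using Fin.lastCases with
    | cast j => exact hprefix j
    | last =>
      have hintegrable := intervalIntegrable_of_forall_mem_Icc hmeas hmem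
      rw [← intervalIntegral.integral_add_adjacent_intervals (hintegrable _ c) (hintegrable c _),
        hprefix,
        integral_ite_le_of_ge le_rfl (ht (Fin.castSucc_lt_last _).le),
        intervalIntegral.integral_const, smul_eq_mul, ← Fin.succ_last, mul_comm, ← hpv]
      ring

theorem exists_mem_Icc_eq_mul_of_div_le_of_le_div {a b x y : ℝ} (ha : 0 < a) (hab : a ≤ b)
    (hx : 0 < x) (hlo : x / b ≤ y) (hhi : y ≤ x / a) : 0 ≤ y ∧ ∃ v ∈ Icc a b, x = v * y := by
  have hb : 0 < b := ha.trans_le hab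
  have hy : 0 < y := (div_pos hx hb).trans_le hlo
  refine ⟨hy.le, x / y, ⟨?_, ?_⟩, (div_mul_cancel₀ x hy.ne').symm⟩
  · rw [le_div_iff₀ hy, mul_comm]
    exact (le_div_iff₀ ha).mp hhi
  · rw [div_le_iff₀ hy, mul_comm]
    exact (div_le_iff₀ hb).mp hlo

/-- Lemma 1 (single-integrator form): a schedule of entry times satisfying all
release-time and deadline constraints along a vehicle's route is realizable by
a single admissible input signal. -/
theorem schedule_realizable (umin umax y0 : ℝ)
    (humin : 0 < umin) (hbound : umin ≤ umax)
    (d : ℕ) (hd : 1 ≤ d)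
    (α T : Fin d → ℝ) (hα : StrictMono α)
    (hy0 : y0 < α ⟨0, hd⟩)
    (hT0l : (α ⟨0, hd⟩ - y0) / umax ≤ T ⟨0, hd⟩)
    (hT0u : T ⟨0, hd⟩ ≤ (α ⟨0, hd⟩ - y0) / umin)
    (hstep : ∀ k : ℕ, ∀ hk : k + 1 < d,
      (α ⟨k + 1, hk⟩ - α ⟨k, Nat.lt_of_succ_lt hk⟩) / umax
          ≤ T ⟨k + 1, hk⟩ - T ⟨k, Nat.lt_of_succ_lt hk⟩ ∧
        T ⟨k + 1, hk⟩ - T ⟨k, Nat.lt_of_succ_lt hk⟩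
          ≤ (α ⟨k + 1, hk⟩ - α ⟨k, Nat.lt_of_succ_lt hk⟩) / umin) :
    ∃ u : ℝ → ℝ, Admissible umin umax u ∧
      ∀ k : Fin d, y0 + ∫ s in (0:ℝ)..T k, u s = α k := by
  obtain ⟨n, rfl⟩ : ∃ n, d = n + 1 := ⟨d - 1, by omega⟩
  set t : Fin (n + 2) → ℝ := Fin.cons 0 T
  set p : Fin (n + 2) → ℝ := Fin.cons y0 α
  have hleg : ∀ i : Fin (n + 1), 0 ≤ t i.succ - t i.castSucc ∧
      ∃ v ∈ Icc umin umax, p i.succ - p i.castSucc = v * (t i.succ - t i.castSucc) := by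
    refine Fin.cases ?_ fun j => ?_
    · exact exists_mem_Icc_eq_mul_of_div_le_of_le_div humin hbound
        (by simpa [p] using hy0) (by simpa [p, t] using hT0l) (by simpa [p, t] using hT0u)
    · obtain ⟨hlo, hhi⟩ := hstep j (by omega)
      simp only [t, p, ← Fin.succ_castSucc, Fin.cons_succ]
      exact exists_mem_Icc_eq_mul_of_div_le_of_le_div humin hbound
        (sub_pos.mpr (hα (Fin.castSucc_lt_succ (i := j)))) hlo hhi
  obtain ⟨u, hu, hub, hint⟩ := exists_control_of_slopes_mem_Icc hbound t p
    (Fin.monotone_iff_le_succ.mpr fun i => sub_nonneg.mp (hleg i).1) fun i => (hleg i).2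
  refine ⟨u, ⟨hu, fun s _ => hub s⟩, fun k => ?_⟩
  have hk := hint k.succ
  simp only [t, p, Fin.cons_zero, Fin.cons_succ] at hk
  linarith
end
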